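/- arXiv:1905.02709 — 2 statements merged into one kernel-verified Lean document; each statement's English description precedes it below -/
import Mathlib

section
/- For any finite sequence of probabilities a_1, ..., a_n in [0,1], letting b_j = 1 - a_j, we have sum_{i=1}^n a_i * (prod_{j<i} b_j)^2 >= (1/2) * sum_{i=1}^n a_i * prod_{j<i} b_j. -/
open Finset

lemma aux_sum_eq (g : ℕ → ℝ) (m : ℕ) :
    ∑ i ∈ range m, g i * ∏ j ∈ range i, (1 - g j) = 1 - ∏ j ∈ range m, (1 - g j) := by
  induction m with
  | zero => simp
  | succ m ih => rw [Finset.sum_range_succ, Finset.prod_range_succ, ih]; ring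

lemma aux_sq_ge (g : ℕ → ℝ) (hg : ∀ j, 0 ≤ g j ∧ g j ≤ 1) (m : ℕ) :
    ∑ i ∈ range m, g i * (∏ j ∈ range i, (1 - g j)) ^ 2 ≥
      (1 - (∏ j ∈ range m, (1 - g j)) ^ 2) / 2 := by
  induction m with
  | zero => simp
  | succ m ih =>
    rw [Finset.sum_range_succ, Finset.prod_range_succ]
    have hP : 0 ≤ ∏ j ∈ range m, (1 - g j) ∧ ∏ j ∈ range m, (1 - g j) ≤ 1 := by
      constructor
      · exact Finset.prod_nonneg fun j _ => by linarith [(hg j).2]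
      · exact Finset.prod_le_one (fun j _ => by linarith [(hg j).2])
          (fun j _ => by linarith [(hg j).1])
    set P := ∏ j ∈ range m, (1 - g j)
    have h1 := (hg m).1
    have h2 := (hg m).2
    nlinarith [sq_nonneg P, sq_nonneg (g m), mul_nonneg h1 (sq_nonneg P),
      mul_nonneg (mul_nonneg h1 h1) (sq_nonneg P)]

theorem stmt_0 (n : ℕ) (a : Fin n → ℝ)
    (ha : ∀ i, 0 ≤ a i ∧ a i ≤ 1) :
    ∑ i, a i * (∏ j ∈ Finset.Iio i, (1 - a j)) ^ 2 ≥
      (1 / 2) * ∑ i, a i * ∏ j ∈ Finset.Iio i, (1 - a j) := by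
  set g : ℕ → ℝ := fun j => if h : j < n then a ⟨j, h⟩ else 0 with hg
  have hgc : ∀ j, 0 ≤ g j ∧ g j ≤ 1 := by
    intro j
    simp only [hg]
    split
    · exact ha _
    · norm_num
  have hprod : ∀ i : Fin n, ∏ j ∈ Finset.Iio i, (1 - a j) = ∏ j ∈ range i.val, (1 - g j) := by
    intro i
    rw [← Nat.Iio_eq_range, ← Fin.map_valEmbedding_Iio, Finset.prod_map]
    apply Finset.prod_congr rfl
    intro j _
    simp [hg, j.isLt]
  have hL : ∑ i, a i * (∏ j ∈ Finset.Iio i, (1 - a j)) ^ 2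
      = ∑ i ∈ range n, g i * (∏ j ∈ range i, (1 - g j)) ^ 2 := by
    rw [Finset.sum_range fun i => _]
    apply Finset.sum_congr rfl
    intro i _
    rw [hprod i]
    congr 1
    simp [hg, i.isLt]
  have hR : ∑ i, a i * ∏ j ∈ Finset.Iio i, (1 - a j)
      = ∑ i ∈ range n, g i * ∏ j ∈ range i, (1 - g j) := by
    rw [Finset.sum_range fun i => _]
    apply Finset.sum_congr rfl
    intro i _
    rw [hprod i]
    congr 1
    simp [hg, i.isLt]
  rw [hL, hR, aux_sum_eq]
  have h := aux_sq_ge g hgc n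
  have hP : 0 ≤ ∏ j ∈ range n, (1 - g j) ∧ ∏ j ∈ range n, (1 - g j) ≤ 1 := by
    constructor
    · exact Finset.prod_nonneg fun j _ => by linarith [(hgc j).2]
    · exact Finset.prod_le_one (fun j _ => by linarith [(hgc j).2])
        (fun j _ => by linarith [(hgc j).1])
  nlinarith [hP.1, hP.2]
end

section
/- With the single-hire DP recurrence S(i, s) = max(p_i*v_i + (1-p_i)*S(i+1, s-1), S(i+1, s)) (base cases S(n, s) = S(i, 0) = 0, v sorted non-increasing, v_i >= 0, p_i in [0,1]), for every subset T of {i, ..., n-1} with |T| <= s, S(i, s) >= sum over elements j of T (in increasing index order) of p_j * v_j * prod over earlier elements j' of T of (1 - p_{j'}). -/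
theorem stmt_11 (n : ℕ) (v p : ℕ → ℝ)
    (hv : ∀ i, i < n → 0 ≤ v i)
    (hsorted : ∀ i j, i ≤ j → j < n → v j ≤ v i)
    (hp : ∀ i, i < n → 0 ≤ p i ∧ p i ≤ 1)
    (S : ℕ → ℕ → ℝ)
    (hbase1 : ∀ s, S n s = 0)
    (hbase2 : ∀ i, S i 0 = 0)
    (hrec : ∀ i, i < n → ∀ s,
      S i (s + 1) = max (p i * v i + (1 - p i) * S (i + 1) s) (S (i + 1) (s + 1))) :
    ∀ (i s : ℕ) (T : Finset ℕ), i ≤ n → (∀ j ∈ T, i ≤ j ∧ j < n) → T.card ≤ s →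
      S i s ≥ ∑ j ∈ T, p j * v j * ∏ j' ∈ T.filter (· < j), (1 - p j') := by
  have key : ∀ k i s (T : Finset ℕ), n - i ≤ k → i ≤ n → (∀ j ∈ T, i ≤ j ∧ j < n) →
      T.card ≤ s →
      S i s ≥ ∑ j ∈ T, p j * v j * ∏ j' ∈ T.filter (· < j), (1 - p j') := by
    intro k
    induction k with
    | zero =>
      intro i s T hk hin hT hcard
      have hi : i = n := by omega
      have hTe : T = ∅ := by
        apply Finset.eq_empty_of_forall_notMem
        intro j hj
        have := hT j hj
        omega
      subst hi
      rw [hTe, Finset.sum_empty, hbase1]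
    | succ k ih =>
      intro i s T hk hin hT hcard
      rcases eq_or_lt_of_le hin with heq | hlt
      · have hTe : T = ∅ := by
          apply Finset.eq_empty_of_forall_notMem
          intro j hj
          have := hT j hj
          omega
        subst heq
        rw [hTe, Finset.sum_empty, hbase1]
      · have hk' : n - (i + 1) ≤ k := by omega
        by_cases hiT : i ∈ T
        · cases s with
          | zero =>
            exfalso
            have := Finset.card_pos.mpr ⟨i, hiT⟩
            omega
          | succ s =>
            set T' := T.erase i with hT'def
            have hmem : ∀ j ∈ T', i + 1 ≤ j ∧ j < n := by
              intro j hj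
              have h1 := hT j (Finset.mem_of_mem_erase hj)
              have h2 := Finset.ne_of_mem_erase hj
              exact ⟨by omega, h1.2⟩
            have hcard' : T'.card ≤ s := by
              rw [hT'def, Finset.card_erase_of_mem hiT]
              omega
            have IH := ih (i + 1) s T' hk' (by omega) hmem hcard'
            have hpi := hp i hlt
            have hTins : T = insert i T' := (Finset.insert_erase hiT).symm
            have hsum : ∑ j ∈ T, p j * v j * ∏ j' ∈ T.filter (· < j), (1 - p j')
                = p i * v i + (1 - p i) *
                  ∑ j ∈ T', p j * v j * ∏ j' ∈ T'.filter (· < j), (1 - p j') := by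
              rw [hTins, Finset.sum_insert (Finset.notMem_erase i T)]
              congr 1
              · have hfe : (insert i T').filter (· < i) = ∅ := by
                  apply Finset.filter_eq_empty_iff.mpr
                  intro j hj
                  rcases Finset.mem_insert.mp hj with h | h
                  · omega
                  · have := hmem j h
                    simp only [not_lt]
                    omega
                rw [hfe, Finset.prod_empty, mul_one]
              · rw [Finset.mul_sum]
                apply Finset.sum_congr rfl
                intro j hj
                have hij : i < j := (hmem j hj).1
                have hfil : (insert i T').filter (· < j) = insert i (T'.filter (· < j)) := by
                  rw [Finset.filter_insert, if_pos hij]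
                have hinf : i ∉ T'.filter (· < j) := fun h =>
                  Finset.notMem_erase i T (Finset.mem_of_mem_filter i h)
                rw [hfil, Finset.prod_insert hinf]
                ring
            rw [hsum, hrec i hlt s]
            refine le_trans ?_ (le_max_left _ _)
            have : (1 - p i) * (∑ j ∈ T', p j * v j * ∏ j' ∈ T'.filter (· < j), (1 - p j'))
                ≤ (1 - p i) * S (i + 1) s :=
              mul_le_mul_of_nonneg_left IH (by linarith [hpi.2])
            linarith
        · have hmem : ∀ j ∈ T, i + 1 ≤ j ∧ j < n := by
            intro j hj
            have h1 := hT j hj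
            have : j ≠ i := fun h => hiT (h ▸ hj)
            exact ⟨by omega, h1.2⟩
          cases s with
          | zero =>
            have hTe : T = ∅ := Finset.card_eq_zero.mp (by omega)
            rw [hTe, Finset.sum_empty, hbase2]
          | succ s =>
            have IH := ih (i + 1) (s + 1) T hk' (by omega) hmem hcard
            rw [hrec i hlt s]
            exact le_trans IH (le_max_right _ _)
  intro i s T hin hT hcard
  exact key (n - i) i s T le_rfl hin hT hcard
end
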